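/- arXiv:nlin/0412022 — 2 statements merged into one kernel-verified Lean document; each statement's English description precedes it below -/
import Mathlib

section
/- Suppose θ : ℝ → ℝ is a C³ solution of βωk²θ''' + (k² − ω²)θ'' − αωθ' − sin(θ) + γ = 0 with θ(z+2π) = θ(z) + 2π, α > 0, β > 0, γ > 0, k > 0, ω > 0. Then (γ−1)/α ≤ ω ≤ γ/α. -/
open Real MeasureTheory intervalIntegral

/-!
Integrating the equation over one period, the derivative terms drop out because `θ'` and `θ''`
are `2π`-periodic, leaving `∫ sin θ = 2π (γ - αω)`; as `sin θ ≤ 1`, this gives `γ - 1 ≤ αω`.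
Multiplying the equation by `θ'` first and integrating gives the energy balance
`αω ∫ θ'² + βωk² ∫ θ''² = 2πγ`, while `∫ θ'² ≥ 2π` since `θ'² ≥ 2θ' - 1` and `θ` gains `2π`
over a period; hence `αω ≤ γ`.
-/

theorem hasDerivAt_iteratedDeriv {f : ℝ → ℝ} {n m : ℕ} (hf : ContDiff ℝ n f) (hm : m < n)
    (x : ℝ) : HasDerivAt (iteratedDeriv m f) (iteratedDeriv (m + 1) f x) x := by
  rw [iteratedDeriv_succ]
  exact (hf.differentiable_iteratedDeriv m (mod_cast hm) x).hasDerivAt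

theorem hasDerivAt_derivs_of_contDiff_three {f : ℝ → ℝ} (hf : ContDiff ℝ 3 f) (x : ℝ) :
    HasDerivAt f (deriv f x) x ∧ HasDerivAt (deriv f) (iteratedDeriv 2 f x) x ∧
      HasDerivAt (iteratedDeriv 2 f) (iteratedDeriv 3 f x) x := by
  refine ⟨?_, ?_, hasDerivAt_iteratedDeriv hf (by norm_num) x⟩
  · simpa using hasDerivAt_iteratedDeriv hf (m := 0) (by norm_num) x
  · simpa using hasDerivAt_iteratedDeriv hf (m := 1) (by norm_num) x

theorem periodic_deriv_of_add_const {g : ℝ → ℝ} {T c : ℝ} (h : ∀ z, g (z + T) = g z + c) :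
    Function.Periodic (deriv g) T := fun z => by
  rw [← deriv_comp_add_const, funext h, deriv_add_const]

theorem periodic_derivs_of_add_const {g : ℝ → ℝ} {T c : ℝ} (h : ∀ z, g (z + T) = g z + c) :
    Function.Periodic (deriv g) T ∧ Function.Periodic (iteratedDeriv 2 g) T := by
  have h1 := periodic_deriv_of_add_const h
  rw [iteratedDeriv_succ, iteratedDeriv_one]
  exact ⟨h1, periodic_deriv_of_add_const (c := 0) fun z => (h1 z).trans (add_zero _).symm⟩

theorem sub_le_integral_deriv_sq {θ : ℝ → ℝ} {a b : ℝ} (hab : a ≤ b) (hθ : ContDiff ℝ 1 θ)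
    (hinc : θ b - θ a = b - a) : b - a ≤ ∫ x in a..b, deriv θ x ^ 2 := by
  have hcont : Continuous (deriv θ) := hθ.continuous_deriv le_rfl
  have hlin : ∫ x in a..b, (2 * deriv θ x - 1) = b - a := by
    rw [integral_eq_sub_of_hasDerivAt (f := fun x => 2 * θ x - x)
      (fun x _ => (((hθ.differentiable one_ne_zero x).hasDerivAt).const_mul 2).sub
        (hasDerivAt_id x))
      ((by fun_prop : Continuous fun x => 2 * deriv θ x - 1).intervalIntegrable _ _)]
    linarith
  calc b - a = ∫ x in a..b, (2 * deriv θ x - 1) := hlin.symm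
    _ ≤ ∫ x in a..b, deriv θ x ^ 2 :=
      integral_mono_on hab
        ((by fun_prop : Continuous fun x => 2 * deriv θ x - 1).intervalIntegrable _ _)
        ((hcont.pow 2).intervalIntegrable _ _)
        fun x _ => by nlinarith [sq_nonneg (deriv θ x - 1)]

section Fluxon

variable {α β γ k ω : ℝ} {θ : ℝ → ℝ} (hθ : ContDiff ℝ 3 θ)
  (hper : ∀ z, θ (z + 2 * π) = θ z + 2 * π)
  (hODE : ∀ z, β * ω * k^2 * iteratedDeriv 3 θ z + (k^2 - ω^2) * iteratedDeriv 2 θ z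
      - α * ω * deriv θ z - Real.sin (θ z) + γ = 0)

include hθ hper hODE

theorem integral_sin_fluxon : ∫ z in (0)..(2 * π), sin (θ z) = 2 * π * (γ - α * ω) := by
  have hc : Continuous θ := hθ.continuous
  obtain ⟨h1, h2⟩ := periodic_derivs_of_add_const hper
  rw [integral_eq_sub_of_hasDerivAt (f := fun z => β * ω * k^2 * iteratedDeriv 2 θ z
      + (k^2 - ω^2) * deriv θ z - α * ω * θ z + γ * z) (fun x _ => ?_)
      ((by fun_prop : Continuous fun z => sin (θ z)).intervalIntegrable _ _)]
  · have h0 := hper 0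
    rw [zero_add] at h0
    rw [h1.eq, h2.eq, h0]
    ring
  · obtain ⟨d0, d1, d2⟩ := hasDerivAt_derivs_of_contDiff_three hθ x
    exact ((((d2.const_mul (β * ω * k^2)).add (d1.const_mul (k^2 - ω^2))).sub
      (d0.const_mul (α * ω))).add ((hasDerivAt_id x).const_mul γ)).congr_deriv
      (by linear_combination hODE x)

theorem integral_energy_fluxon :
    ∫ z in (0)..(2 * π), (α * ω * deriv θ z ^ 2 + β * ω * k^2 * iteratedDeriv 2 θ z ^ 2)
      = 2 * π * γ := by
  have hc1 : Continuous (deriv θ) := hθ.continuous_deriv (by norm_num)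
  have hc2 : Continuous (iteratedDeriv 2 θ) := hθ.continuous_iteratedDeriv 2 (by norm_num)
  obtain ⟨h1, h2⟩ := periodic_derivs_of_add_const hper
  -- `θ' · θ''' = (θ' θ'')' - θ''²`, so `θ'` times the equation is exact up to the two squares.
  rw [integral_eq_sub_of_hasDerivAt (f := fun z => β * ω * k^2 * (iteratedDeriv 2 θ z * deriv θ z)
      + (k^2 - ω^2) / 2 * (deriv θ z * deriv θ z) + cos (θ z) + γ * θ z) (fun x _ => ?_)
      ((by fun_prop : Continuous fun z =>
        α * ω * deriv θ z ^ 2 + β * ω * k^2 * iteratedDeriv 2 θ z ^ 2).intervalIntegrable _ _)]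
  · have h0 := hper 0
    rw [zero_add] at h0
    rw [h1.eq, h2.eq, h0, cos_add_two_pi]
    ring
  · obtain ⟨d0, d1, d2⟩ := hasDerivAt_derivs_of_contDiff_three hθ x
    exact ((((d2.mul d1).const_mul (β * ω * k^2)).add
      ((d1.mul d1).const_mul ((k^2 - ω^2) / 2))).add d0.cos |>.add (d0.const_mul γ)).congr_deriv
      (by linear_combination deriv θ x * hODE x)

theorem sub_one_le_mul_of_fluxon : γ - 1 ≤ α * ω := by
  have hc : Continuous θ := hθ.continuous
  have hsin : ∫ z in (0)..(2 * π), sin (θ z) ≤ 2 * π := calc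
    ∫ z in (0)..(2 * π), sin (θ z) ≤ ∫ _ in (0)..(2 * π), (1 : ℝ) :=
      integral_mono_on two_pi_pos.le
        ((by fun_prop : Continuous fun z => sin (θ z)).intervalIntegrable _ _)
        intervalIntegrable_const fun z _ => sin_le_one (θ z)
    _ = 2 * π := by simp
  nlinarith [integral_sin_fluxon hθ hper hODE, two_pi_pos]

theorem mul_le_of_fluxon (hαω : 0 ≤ α * ω) (hβω : 0 ≤ β * ω) : α * ω ≤ γ := by
  have hc1 : Continuous (deriv θ) := hθ.continuous_deriv (by norm_num)
  have hc2 : Continuous (iteratedDeriv 2 θ) := hθ.continuous_iteratedDeriv 2 (by norm_num)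
  have hθ' := sub_le_integral_deriv_sq two_pi_pos.le (hθ.of_le (by norm_num))
    (by rw [← zero_add (2 * π), hper]; ring)
  rw [sub_zero] at hθ'
  have key : α * ω * (2 * π) ≤ 2 * π * γ := calc
    α * ω * (2 * π) ≤ α * ω * ∫ z in (0)..(2 * π), deriv θ z ^ 2 :=
      mul_le_mul_of_nonneg_left hθ' hαω
    _ = ∫ z in (0)..(2 * π), α * ω * deriv θ z ^ 2 :=
      (intervalIntegral.integral_const_mul _ _).symm
    _ ≤ ∫ z in (0)..(2 * π), (α * ω * deriv θ z ^ 2 + β * ω * k^2 * iteratedDeriv 2 θ z ^ 2) :=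
      integral_mono_on two_pi_pos.le
        ((by fun_prop : Continuous fun z => α * ω * deriv θ z ^ 2).intervalIntegrable _ _)
        ((by fun_prop : Continuous fun z =>
          α * ω * deriv θ z ^ 2 + β * ω * k^2 * iteratedDeriv 2 θ z ^ 2).intervalIntegrable _ _)
        fun z _ => le_add_of_nonneg_right (mul_nonneg (mul_nonneg hβω (sq_nonneg k)) (sq_nonneg _))
    _ = 2 * π * γ := integral_energy_fluxon hθ hper hODE
  nlinarith [two_pi_pos]

end Fluxon

theorem fluxon_frequency_bounds_general
    (α β γ k ω : ℝ) (hα : 0 < α) (hβ : 0 < β) (hω : 0 < ω)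
    (θ : ℝ → ℝ) (hθ : ContDiff ℝ 3 θ)
    (hper : ∀ z, θ (z + 2*π) = θ z + 2*π)
    (hODE : ∀ z, β * ω * k^2 * iteratedDeriv 3 θ z
        + (k^2 - ω^2) * iteratedDeriv 2 θ z
        - α * ω * deriv θ z - Real.sin (θ z) + γ = 0) :
    (γ - 1) / α ≤ ω ∧ ω ≤ γ / α := by
  rw [div_le_iff₀ hα, le_div_iff₀ hα, mul_comm ω]
  exact ⟨sub_one_le_mul_of_fluxon hθ hper hODE,
    mul_le_of_fluxon hθ hper hODE (by positivity) (by positivity)⟩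

/-- Frequency bounds for a rotating fluxon wave: if `θ` is a `C³` solution of
`βωk²θ''' + (k²−ω²)θ'' − αωθ' − sin θ + γ = 0` with `θ(z+2π) = θ(z) + 2π` and
`α, β, γ, k, ω > 0`, then `(γ−1)/α ≤ ω ≤ γ/α`. -/
theorem fluxon_frequency_bounds
    (α β γ k ω : ℝ) (hα : 0 < α) (hβ : 0 < β) (hγ : 0 < γ) (hk : 0 < k)
    (hω : 0 < ω)
    (θ : ℝ → ℝ) (hθ : ContDiff ℝ 3 θ)
    (hper : ∀ z, θ (z + 2*π) = θ z + 2*π)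
    (hODE : ∀ z, β * ω * k^2 * iteratedDeriv 3 θ z
        + (k^2 - ω^2) * iteratedDeriv 2 θ z
        - α * ω * deriv θ z - Real.sin (θ z) + γ = 0) :
    (γ - 1) / α ≤ ω ∧ ω ≤ γ / α :=
  fluxon_frequency_bounds_general α β γ k ω hα hβ hω θ hθ hper hODE
end

section
/- Let u ∈ L²[0,2π] have mean zero and Fourier expansion u(z) = Σ_{l≠0} a_l e^{ilz}. For α > 0, β > 0, k > 0, λ > 0, define L_λ⁻¹(u)(z) = −Σ_{l≠0} a_l[(lα+βk²l³)i + l²(λk²−λ⁻¹)]⁻¹ e^{ilz}. Then ((1/2π)∫₀^{2π}|(L_λ⁻¹u)'|²)^{1/2} ≤ ((α+βk²)² + (λk²−λ⁻¹)²)^{−1/2}·((1/2π)∫₀^{2π}|u|²)^{1/2}. -/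
open Real Complex

/-- Operator bound `‖L_λ⁻¹‖_{Z→Y} ≤ ((α+βk²)² + (λk²−λ⁻¹)²)^{−1/2}`, expressed
via Parseval on Fourier coefficients `a : ℤ → ℂ` with `a 0 = 0`:
the `Y`-norm of `L_λ⁻¹u` is `(∑ l² |a_l|² |m_l|⁻²)^{1/2}` where `m_l` is the
symbol of `L_λ`, and the `Z`-norm of `u` is `(∑ |a_l|²)^{1/2}`. -/
theorem Linv_bound_Z_to_Y
    (α β k lam : ℝ) (hα : 0 < α) (hβ : 0 < β) (hk : 0 < k) (hlam : 0 < lam)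
    (a : ℤ → ℂ) (ha0 : a 0 = 0)
    (hsum : Summable fun l : ℤ => ‖a l‖^2) :
    Real.sqrt (∑' l : ℤ, (l : ℝ)^2 * ‖a l‖^2 *
        (((l : ℝ) * α + β * k^2 * (l : ℝ)^3)^2
          + (l : ℝ)^4 * (lam * k^2 - lam⁻¹)^2)⁻¹)
      ≤ (Real.sqrt ((α + β * k^2)^2 + (lam * k^2 - lam⁻¹)^2))⁻¹
        * Real.sqrt (∑' l : ℤ, ‖a l‖^2) := by
  set C : ℝ := (α + β * k^2)^2 + (lam * k^2 - lam⁻¹)^2 with hC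
  have hbk : 0 < α + β * k^2 := by positivity
  have hCpos : 0 < C := by positivity
  -- termwise bound
  have key : ∀ l : ℤ, (l : ℝ)^2 * ‖a l‖^2 *
      (((l : ℝ) * α + β * k^2 * (l : ℝ)^3)^2
        + (l : ℝ)^4 * (lam * k^2 - lam⁻¹)^2)⁻¹ ≤ C⁻¹ * ‖a l‖^2 := by
    intro l
    rcases eq_or_ne l 0 with rfl | hl
    · simp [ha0]
    · have hl1 : (1 : ℝ) ≤ (l : ℝ)^2 := by
        have := Int.one_le_abs hl
        have : (1 : ℝ) ≤ |(l : ℝ)| := by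
          rw [← Int.cast_abs]; exact_mod_cast this
        nlinarith [abs_nonneg (l : ℝ), _root_.sq_abs (l : ℝ)]
      set D : ℝ := ((l : ℝ) * α + β * k^2 * (l : ℝ)^3)^2
          + (l : ℝ)^4 * (lam * k^2 - lam⁻¹)^2 with hD
      have hl0 : (0 : ℝ) < (l : ℝ)^2 := by linarith
      have hDC : (l : ℝ)^2 * C ≤ D := by
        have h1 : (α + β * k^2)^2 ≤ (α + β * k^2 * (l : ℝ)^2)^2 := by
          have h0 : β * k^2 * 1 ≤ β * k^2 * (l : ℝ)^2 :=
            mul_le_mul_of_nonneg_left hl1 (by positivity)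
          have : α + β * k^2 ≤ α + β * k^2 * (l : ℝ)^2 := by linarith
          nlinarith
        have h2 : (lam * k^2 - lam⁻¹)^2 ≤ (l : ℝ)^2 * (lam * k^2 - lam⁻¹)^2 := by
          nlinarith [sq_nonneg (lam * k^2 - lam⁻¹)]
        have hexp : D = (l : ℝ)^2 * ((α + β * k^2 * (l : ℝ)^2)^2
            + (l : ℝ)^2 * (lam * k^2 - lam⁻¹)^2) := by ring
        rw [hexp, hC]
        have := sq_nonneg ((l : ℝ))
        nlinarith
      have hDpos : 0 < D := lt_of_lt_of_le (by positivity) hDC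
      have hmain : (l : ℝ)^2 * D⁻¹ ≤ C⁻¹ := by
        rw [← div_eq_mul_inv, div_le_iff₀ hDpos, inv_mul_eq_div, le_div_iff₀ hCpos]
        exact hDC
      calc (l : ℝ)^2 * ‖a l‖^2 * D⁻¹ = ((l : ℝ)^2 * D⁻¹) * ‖a l‖^2 := by ring
        _ ≤ C⁻¹ * ‖a l‖^2 := by
            have : (0:ℝ) ≤ ‖a l‖^2 := by positivity
            nlinarith
  have hsum2 : Summable fun l : ℤ => C⁻¹ * ‖a l‖^2 := hsum.mul_left _
  have hsumL : Summable fun l : ℤ => (l : ℝ)^2 * ‖a l‖^2 *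
      (((l : ℝ) * α + β * k^2 * (l : ℝ)^3)^2
        + (l : ℝ)^4 * (lam * k^2 - lam⁻¹)^2)⁻¹ := by
    apply Summable.of_nonneg_of_le (fun l => by positivity) key hsum2
  have htsum : (∑' l : ℤ, (l : ℝ)^2 * ‖a l‖^2 *
      (((l : ℝ) * α + β * k^2 * (l : ℝ)^3)^2
        + (l : ℝ)^4 * (lam * k^2 - lam⁻¹)^2)⁻¹)
      ≤ ∑' l : ℤ, C⁻¹ * ‖a l‖^2 := Summable.tsum_le_tsum key hsumL hsum2
  rw [tsum_mul_left] at htsum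
  calc Real.sqrt _ ≤ Real.sqrt (C⁻¹ * ∑' l : ℤ, ‖a l‖^2) := Real.sqrt_le_sqrt htsum
    _ = (Real.sqrt C)⁻¹ * Real.sqrt (∑' l : ℤ, ‖a l‖^2) := by
        rw [Real.sqrt_mul (by positivity), Real.sqrt_inv]
end
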